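/- Let U = (H ⊗ H ⊗ I_N) · (P₁ ⊗ I₂ ⊗ S₊ + P₀ ⊗ I₂ ⊗ I_N) · (I₂ ⊗ P₀ ⊗ S₋ + I₂ ⊗ P₁ ⊗ I_N) · (Z ⊗ Z ⊗ I_N) · (H ⊗ H ⊗ I_N), indexed by Fin 2 × Fin 2 × Fin N. Then the first column of N×N blocks of U is (L̃₁, D̃₁, D̃₁, Q̃₁): for all j, k ∈ Fin N, U((0,0,j),(0,0,k)) = (L̃₁)_{jk}, U((0,1,j),(0,0,k)) = U((1,0,j),(0,0,k)) = (D̃₁)_{jk}, and U((1,1,j),(0,0,k)) = (Q̃₁)_{jk}, where D̃₁ = (1/4)(S₋ − S₊) (a scaled central finite-difference approximation of d/dx, equal to (h/2)·D₁ with D₁ = (1/(2h))(S₋ − S₊)) and Q̃₁ = (1/2)·I_N + (1/4)(S₊ + S₋) (a scaled trapezoidal quadrature matrix, equal to (1/(2h))·Q₁ with Q₁ = (h/2)(2·I_N + S₊ + S₋)). -/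

import Mathlib

/-!
By the mixed-product rule, conjugating the product of the two controlled shifts by
`(H ⊗ H ⊗ I)` and `(Z ⊗ Z ⊗ I)(H ⊗ H ⊗ I)` gives
`U = ∑_{a,b} (H P_a Z H) ⊗ (H P_b Z H) ⊗ S_{ab}` with `S_{10} = S₊ S₋ = I`, `S_{11} = S₊`,
`S_{00} = S₋`, `S_{01} = I`. Since `H P₀ Z H = ½ [[1,1],[1,1]]` and `H P₁ Z H = ½ [[-1,1],[1,-1]]`,
the first block column is read off from the first columns `½ (1,1)` and `½ (-1,1)`.
-/

open Matrix Kronecker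

noncomputable section

/-- Cyclic shift matrix `S₊`: `(S₊)_{jk} = 1` iff `j ≡ k+1 (mod N)`. -/
def Sp (N : ℕ) [NeZero N] : Matrix (Fin N) (Fin N) ℂ :=
  Matrix.of fun j k => if j = k + 1 then 1 else 0

/-- Cyclic shift matrix `S₋ = S₊ᵀ`. -/
def Sm (N : ℕ) [NeZero N] : Matrix (Fin N) (Fin N) ℂ := (Sp N)ᵀ

def P0 : Matrix (Fin 2) (Fin 2) ℂ := !![1, 0; 0, 0]
def P1 : Matrix (Fin 2) (Fin 2) ℂ := !![0, 0; 0, 1]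
def Hg : Matrix (Fin 2) (Fin 2) ℂ := ((Real.sqrt 2 : ℝ) : ℂ)⁻¹ • !![1, 1; 1, -1]
def Zg : Matrix (Fin 2) (Fin 2) ℂ := !![1, 0; 0, -1]

/-- The normalized discrete 1D periodic Laplacian `L̃₁ = (1/4)(S₊ + S₋) − (1/2)·I_N`. -/
def Lt1 (N : ℕ) [NeZero N] : Matrix (Fin N) (Fin N) ℂ :=
  (1 / 4 : ℂ) • (Sp N + Sm N) - (1 / 2 : ℂ) • (1 : Matrix (Fin N) (Fin N) ℂ)

/-- `D̃₁ = (1/4)(S₋ − S₊)`, a scaled central finite-difference approximation of `d/dx`. -/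
def Dt1 (N : ℕ) [NeZero N] : Matrix (Fin N) (Fin N) ℂ :=
  (1 / 4 : ℂ) • (Sm N - Sp N)

/-- `Q̃₁ = (1/2)·I_N + (1/4)(S₊ + S₋)`, a scaled trapezoidal quadrature matrix. -/
def Qt1 (N : ℕ) [NeZero N] : Matrix (Fin N) (Fin N) ℂ :=
  (1 / 2 : ℂ) • (1 : Matrix (Fin N) (Fin N) ℂ) + (1 / 4 : ℂ) • (Sp N + Sm N)

theorem Sp_mul_Sm (N : ℕ) [NeZero N] : Sp N * Sm N = 1 := by
  ext j k
  have hshift (i l : Fin N) : i = l + 1 ↔ l = i - 1 := by rw [eq_sub_iff_add_eq, eq_comm]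
  simp [Sp, Sm, Matrix.mul_apply, Matrix.one_apply, hshift, eq_comm]

theorem ofReal_inv_sqrt_two_mul_self :
    ((Real.sqrt 2 : ℝ) : ℂ)⁻¹ * ((Real.sqrt 2 : ℝ) : ℂ)⁻¹ = 1 / 2 := by
  rw [← mul_inv, ← Complex.ofReal_mul, Real.mul_self_sqrt zero_le_two]
  norm_num

theorem Hg_mul_P0_mul_Zg_mul_Hg : Hg * P0 * Zg * Hg = (1 / 2 : ℂ) • !![1, 1; 1, 1] := by
  ext i j
  fin_cases i <;> fin_cases j <;>
    simp [Hg, P0, Zg, Matrix.mul_apply, Fin.sum_univ_two, ofReal_inv_sqrt_two_mul_self]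

theorem Hg_mul_P1_mul_Zg_mul_Hg : Hg * P1 * Zg * Hg = (1 / 2 : ℂ) • !![-1, 1; 1, -1] := by
  ext i j
  fin_cases i <;> fin_cases j <;>
    simp [Hg, P1, Zg, Matrix.mul_apply, Fin.sum_univ_two, ofReal_inv_sqrt_two_mul_self]

theorem kronecker₃_mul_kronecker₃ {R l m n : Type*} [CommSemiring R] [Fintype l] [Fintype m]
    [Fintype n] (A A' : Matrix l l R) (B B' : Matrix m m R) (C C' : Matrix n n R) :
    (A ⊗ₖ B ⊗ₖ C) * (A' ⊗ₖ B' ⊗ₖ C') = (A * A') ⊗ₖ (B * B') ⊗ₖ (C * C') := by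
  rw [Matrix.mul_kronecker_mul, Matrix.mul_kronecker_mul]

theorem controlledShifts_mul (N : ℕ) [NeZero N] :
    (P1 ⊗ₖ (1 : Matrix (Fin 2) (Fin 2) ℂ) ⊗ₖ Sp N
        + P0 ⊗ₖ (1 : Matrix (Fin 2) (Fin 2) ℂ) ⊗ₖ (1 : Matrix (Fin N) (Fin N) ℂ))
      * ((1 : Matrix (Fin 2) (Fin 2) ℂ) ⊗ₖ P0 ⊗ₖ Sm N
        + (1 : Matrix (Fin 2) (Fin 2) ℂ) ⊗ₖ P1 ⊗ₖ (1 : Matrix (Fin N) (Fin N) ℂ))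
      = P1 ⊗ₖ P0 ⊗ₖ 1 + P1 ⊗ₖ P1 ⊗ₖ Sp N + P0 ⊗ₖ P0 ⊗ₖ Sm N + P0 ⊗ₖ P1 ⊗ₖ 1 := by
  simp only [Matrix.mul_add, Matrix.add_mul, kronecker₃_mul_kronecker₃, Sp_mul_Sm,
    Matrix.mul_one, Matrix.one_mul]
  abel

theorem hadamardConj_kronecker₃ {n : Type*} [Fintype n] [DecidableEq n]
    (A B : Matrix (Fin 2) (Fin 2) ℂ) (C : Matrix n n ℂ) :
    (Hg ⊗ₖ Hg ⊗ₖ (1 : Matrix n n ℂ)) * (A ⊗ₖ B ⊗ₖ C) * (Zg ⊗ₖ Zg ⊗ₖ (1 : Matrix n n ℂ))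
      * (Hg ⊗ₖ Hg ⊗ₖ (1 : Matrix n n ℂ))
      = (Hg * A * Zg * Hg) ⊗ₖ (Hg * B * Zg * Hg) ⊗ₖ C := by
  simp only [kronecker₃_mul_kronecker₃, Matrix.one_mul, Matrix.mul_one]

theorem stmt_3_general (N : ℕ) [NeZero N]
    (U : Matrix ((Fin 2 × Fin 2) × Fin N) ((Fin 2 × Fin 2) × Fin N) ℂ)
    (hU : U = (Hg ⊗ₖ Hg ⊗ₖ (1 : Matrix (Fin N) (Fin N) ℂ))
      * (P1 ⊗ₖ (1 : Matrix (Fin 2) (Fin 2) ℂ) ⊗ₖ Sp N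
          + P0 ⊗ₖ (1 : Matrix (Fin 2) (Fin 2) ℂ) ⊗ₖ (1 : Matrix (Fin N) (Fin N) ℂ))
      * ((1 : Matrix (Fin 2) (Fin 2) ℂ) ⊗ₖ P0 ⊗ₖ Sm N
          + (1 : Matrix (Fin 2) (Fin 2) ℂ) ⊗ₖ P1 ⊗ₖ (1 : Matrix (Fin N) (Fin N) ℂ))
      * (Zg ⊗ₖ Zg ⊗ₖ (1 : Matrix (Fin N) (Fin N) ℂ))
      * (Hg ⊗ₖ Hg ⊗ₖ (1 : Matrix (Fin N) (Fin N) ℂ))) :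
    ∀ j k : Fin N,
      U (((0, 0), j)) (((0, 0), k)) = Lt1 N j k ∧
      U (((0, 1), j)) (((0, 0), k)) = Dt1 N j k ∧
      U (((1, 0), j)) (((0, 0), k)) = Dt1 N j k ∧
      U (((1, 1), j)) (((0, 0), k)) = Qt1 N j k := by
  subst hU
  rw [Matrix.mul_assoc _ _ (_ + _), controlledShifts_mul]
  simp only [Matrix.mul_add, Matrix.add_mul, hadamardConj_kronecker₃, Hg_mul_P0_mul_Zg_mul_Hg,
    Hg_mul_P1_mul_Zg_mul_Hg]
  intro j k
  refine ⟨?_, ?_, ?_, ?_⟩ <;>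
  · simp only [Lt1, Dt1, Qt1, one_div, smul_of, smul_cons, smul_eq_mul, smul_empty, smul_add,
      Matrix.add_apply, Matrix.sub_apply, Matrix.smul_apply, kroneckerMap_apply, of_apply,
      cons_val', cons_val_zero, cons_val_one, cons_val_fin_one, mul_neg, mul_one, neg_mul, neg_neg]
    ring

theorem stmt_3 (n : ℕ) (hn : 1 ≤ n) (N : ℕ) (hN : N = 2 ^ n) [NeZero N]
    (U : Matrix ((Fin 2 × Fin 2) × Fin N) ((Fin 2 × Fin 2) × Fin N) ℂ)
    (hU : U = (Hg ⊗ₖ Hg ⊗ₖ (1 : Matrix (Fin N) (Fin N) ℂ))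
      * (P1 ⊗ₖ (1 : Matrix (Fin 2) (Fin 2) ℂ) ⊗ₖ Sp N
          + P0 ⊗ₖ (1 : Matrix (Fin 2) (Fin 2) ℂ) ⊗ₖ (1 : Matrix (Fin N) (Fin N) ℂ))
      * ((1 : Matrix (Fin 2) (Fin 2) ℂ) ⊗ₖ P0 ⊗ₖ Sm N
          + (1 : Matrix (Fin 2) (Fin 2) ℂ) ⊗ₖ P1 ⊗ₖ (1 : Matrix (Fin N) (Fin N) ℂ))
      * (Zg ⊗ₖ Zg ⊗ₖ (1 : Matrix (Fin N) (Fin N) ℂ))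
      * (Hg ⊗ₖ Hg ⊗ₖ (1 : Matrix (Fin N) (Fin N) ℂ))) :
    ∀ j k : Fin N,
      U (((0, 0), j)) (((0, 0), k)) = Lt1 N j k ∧
      U (((0, 1), j)) (((0, 0), k)) = Dt1 N j k ∧
      U (((1, 0), j)) (((0, 0), k)) = Dt1 N j k ∧
      U (((1, 1), j)) (((0, 0), k)) = Qt1 N j k :=
  stmt_3_general N U hU
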